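/- arXiv:1801.00285 — 2 statements merged into one kernel-verified Lean document; each statement's English description precedes it below -/
import Mathlib

section
/- Delay lemma for λ•→: if Γ₁, Γ₂ ⊢ e : t is derivable in λ•→, then Γ₁, •Γ₂ ⊢ e : •t is derivable, where •Γ₂ is obtained from Γ₂ by prefixing every declared type with one •. -/
namespace LambdaBullet

/-- Head constructors for pseudo-types. -/
inductive TyHead : Type
  | var (n : ℕ)
  | nat
  | prod
  | arrow
  | bullet

/-- Arity of each pseudo-type constructor. -/
def tyArity : TyHead → Type
  | .var _ => Empty
  | .nat => Empty
  | .prod => Bool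
  | .arrow => Bool
  | .bullet => Unit

/-- The polynomial functor whose M-type is the type of pseudo-types. -/
def TyP : PFunctor := ⟨TyHead, tyArity⟩

/-- Pseudo-types: possibly infinite coinductively generated trees. -/
abbrev PseudoType := TyP.M

/-- Type variable. -/
def tvar (n : ℕ) : PseudoType := PFunctor.M.mk ⟨TyHead.var n, Empty.elim⟩
/-- The type `Nat`. -/
def tnat : PseudoType := PFunctor.M.mk ⟨TyHead.nat, Empty.elim⟩
/-- Product type. -/
def tprod (t s : PseudoType) : PseudoType :=
  PFunctor.M.mk ⟨TyHead.prod, fun b => bif b then s else t⟩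
/-- Arrow type. -/
def tarrow (t s : PseudoType) : PseudoType :=
  PFunctor.M.mk ⟨TyHead.arrow, fun b => bif b then s else t⟩
/-- Delay type `•t`. -/
def tbullet (t : PseudoType) : PseudoType :=
  PFunctor.M.mk ⟨TyHead.bullet, fun _ => t⟩
/-- Iterated delay `•ⁿ t`. -/
def tbulletN (n : ℕ) (t : PseudoType) : PseudoType := tbullet^[n] t

/-- `Child t s` holds iff `s` is an immediate subtree of `t`. -/
def Child (t s : PseudoType) : Prop := ∃ b : TyP.B t.dest.1, t.dest.2 b = s

/-- `Subtree t s` holds iff `s` is a subtree of `t`. -/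
def Subtree (t s : PseudoType) : Prop := Relation.ReflTransGen Child t s

/-- A pseudo-type is regular if it has finitely many distinct subtrees. -/
def Regular (t : PseudoType) : Prop := {s | Subtree t s}.Finite

/-- The root of the tree is a `•`. -/
def headIsBullet (t : PseudoType) : Prop := t.dest.1 = TyHead.bullet

/-- A pseudo-type is guarded if every infinite path in its tree has
infinitely many `•`'s. -/
def Guarded (t : PseudoType) : Prop :=
  ∀ f : ℕ → PseudoType, f 0 = t → (∀ n, Child (f n) (f (n + 1))) →
    ∀ N, ∃ n, N ≤ n ∧ headIsBullet (f n)

/-- A type is a regular and guarded pseudo-type. -/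
def IsType (t : PseudoType) : Prop := Regular t ∧ Guarded t

/-- `•^∞`: the unique pseudo-type satisfying `•^∞ = • •^∞`. -/
def binf : PseudoType := PFunctor.M.corec (fun _ : Unit => ⟨TyHead.bullet, fun _ => ()⟩) ()

/-- Constants. -/
inductive Const : Type
  | pair
  | cfst
  | csnd
  | zero
  | succ

/-- Expressions (with de Bruijn indices for variables). -/
inductive Expr : Type
  | var (x : ℕ)
  | const (k : Const)
  | lam (e : Expr)
  | app (e₁ e₂ : Expr)

def liftRen (f : ℕ → ℕ) : ℕ → ℕ
  | 0 => 0
  | n + 1 => f n + 1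

def rename (f : ℕ → ℕ) : Expr → Expr
  | .var n => .var (f n)
  | .const k => .const k
  | .lam e => .lam (rename (liftRen f) e)
  | .app a b => .app (rename f a) (rename f b)

def liftSub (ρ : ℕ → Expr) : ℕ → Expr
  | 0 => .var 0
  | n + 1 => rename Nat.succ (ρ n)

/-- Simultaneous (capture-avoiding) substitution. -/
def substE (ρ : ℕ → Expr) : Expr → Expr
  | .var n => ρ n
  | .const k => .const k
  | .lam e => .lam (substE (liftSub ρ) e)
  | .app a b => .app (substE ρ a) (substE ρ b)

/-- `subst0 e f` is `e[f/x]` for the topmost variable `x`. -/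
def subst0 (e f : Expr) : Expr :=
  substE (fun n => match n with | 0 => f | n + 1 => .var n) e

/-- The pair `⟨e₁, e₂⟩`. -/
def mkPair (e₁ e₂ : Expr) : Expr := .app (.app (.const .pair) e₁) e₂

/-- Evaluation contexts E ::= [] | E e | fst E | snd E | succ E. -/
inductive ECtx : Type
  | hole
  | app (E : ECtx) (e : Expr)
  | fst (E : ECtx)
  | snd (E : ECtx)
  | succ (E : ECtx)

/-- Plugging an expression into an evaluation context. -/
def ECtx.plug : ECtx → Expr → Expr
  | .hole, e => e
  | .app E f, e => .app (E.plug e) f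
  | .fst E, e => .app (.const .cfst) (E.plug e)
  | .snd E, e => .app (.const .csnd) (E.plug e)
  | .succ E, e => .app (.const .succ) (E.plug e)

/-- Head reduction rules. -/
inductive HeadRed : Expr → Expr → Prop
  | beta (e f) : HeadRed (.app (.lam e) f) (subst0 e f)
  | fst (e₁ e₂) : HeadRed (.app (.const .cfst) (mkPair e₁ e₂)) e₁
  | snd (e₁ e₂) : HeadRed (.app (.const .csnd) (mkPair e₁ e₂)) e₂

/-- Weak head (call-by-name) reduction: head rules closed under evaluation contexts. -/
def Red (a b : Expr) : Prop :=
  ∃ (E : ECtx) (e f : Expr), HeadRed e f ∧ a = E.plug e ∧ b = E.plug f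

/-- Many-step reduction. -/
def RedStar : Expr → Expr → Prop := Relation.ReflTransGen Red

/-- (Weak head) normal forms. -/
def NormalForm (e : Expr) : Prop := ∀ f, ¬ Red e f

/-- Typing contexts: finite maps from (de Bruijn) variables to types. -/
def Ctx : Type := ℕ → Option PseudoType

/-- Extending a typing context with a type for the topmost variable. -/
def Ctx.cons (t : PseudoType) (Γ : Ctx) : Ctx :=
  fun n => match n with | 0 => some t | n + 1 => Γ n

/-- The type assignment κ for constants. -/
inductive KappaTy : Const → PseudoType → Prop
  | pair {t s} : IsType t → IsType s →
      KappaTy .pair (tarrow t (tarrow s (tprod t s)))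
  | fst {t s} : IsType t → IsType s →
      KappaTy .cfst (tarrow (tprod t s) t)
  | snd {t s} : IsType t → IsType s →
      KappaTy .csnd (tarrow (tprod t s) s)
  | zero : KappaTy .zero tnat
  | succ : KappaTy .succ (tarrow tnat tnat)

/-- The type assignment system λ•→. -/
inductive Types : Ctx → Expr → PseudoType → Prop
  | ax {Γ x t} : Γ x = some t → IsType t → Types Γ (.var x) t
  | const {Γ k t} : KappaTy k t → Types Γ (.const k) t
  | bulletI {Γ e t} : Types Γ e t → Types Γ e (tbullet t)
  | arrowI {Γ e n t s} :
      Types (Ctx.cons (tbulletN n t) Γ) e (tbulletN n s) →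
      Types Γ (.lam e) (tbulletN n (tarrow t s))
  | arrowE {Γ e₁ e₂ n t s} :
      Types Γ e₁ (tbulletN n (tarrow t s)) → Types Γ e₂ (tbulletN n t) →
      Types Γ (.app e₁ e₂) (tbulletN n s)


/-- `Γ'` is obtained from `Γ` by prefixing the types of some of the declared
variables (those of the part `Γ₂`) with one `•`. -/
def DelaySome (Γ Γ' : Ctx) : Prop :=
  ∀ x, Γ' x = Γ x ∨ Γ' x = Option.map tbullet (Γ x)

/-!
The proof is an induction on the derivation. A variable whose type is delayed gets `•t` from
the axiom rule (`•t` is again regular and guarded), every other leaf is delayed by `(•I)`, and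
since `(→I)` and `(→E)` hold for every `•ⁿ`, one more `•` just raises `n` by one. Under a binder
the bound variable's type `•ⁿt` becomes `•ⁿ⁺¹t`, so the induction hypothesis must allow an
arbitrary set of delayed variables, which is what `DelaySome` expresses.
-/

lemma child_tbullet_iff {t s : PseudoType} : Child (tbullet t) s ↔ s = t := by
  simp only [Child, tbullet]
  exact ⟨fun ⟨_, hb⟩ => hb.symm, fun hs => ⟨(() : tyArity .bullet), hs.symm⟩⟩

lemma Regular.tbullet {t : PseudoType} (ht : Regular t) : Regular (tbullet t) := by
  refine (ht.insert (LambdaBullet.tbullet t)).subset fun s hs => ?_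
  rcases Relation.ReflTransGen.cases_head hs with rfl | ⟨c, hc, hcs⟩
  · exact Set.mem_insert _ _
  · rw [child_tbullet_iff.mp hc] at hcs
    exact Set.mem_insert_of_mem _ hcs

lemma Guarded.tbullet {t : PseudoType} (ht : Guarded t) : Guarded (tbullet t) := by
  intro f hf0 hstep N
  have hf1 : f 1 = t := child_tbullet_iff.mp (hf0 ▸ hstep 0)
  obtain ⟨n, hn, hb⟩ := ht (fun n => f (n + 1)) hf1 (fun n => hstep (n + 1)) N
  exact ⟨n + 1, hn.trans n.le_succ, hb⟩

lemma IsType.tbullet {t : PseudoType} (ht : IsType t) : IsType (tbullet t) :=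
  ⟨ht.1.tbullet, ht.2.tbullet⟩

lemma tbullet_tbulletN (n : ℕ) (t : PseudoType) :
    tbullet (tbulletN n t) = tbulletN (n + 1) t :=
  (Function.iterate_succ_apply' tbullet n t).symm

lemma DelaySome.cons {Γ Γ' : Ctx} (hdel : DelaySome Γ Γ') (u : PseudoType) :
    DelaySome (Ctx.cons u Γ) (Ctx.cons (tbullet u) Γ')
  | 0 => Or.inr rfl
  | x + 1 => hdel x

/-- Delay: if `Γ₁, Γ₂ ⊢ e : t` in λ•→ then `Γ₁, •Γ₂ ⊢ e : •t`. -/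
theorem delay (Γ Γ' : Ctx) (e : Expr) (t : PseudoType)
    (hdel : DelaySome Γ Γ')
    (h : Types Γ e t) : Types Γ' e (tbullet t) := by
  induction h generalizing Γ' with
  | @ax Γ x t hx ht =>
    rcases hdel x with hsame | hdelayed
    · exact (Types.ax (hsame.trans hx) ht).bulletI
    · rw [hx] at hdelayed
      exact Types.ax hdelayed ht.tbullet
  | const hk => exact (Types.const hk).bulletI
  | bulletI _ ih => exact (ih Γ' hdel).bulletI
  | arrowI _ ih =>
    have hbody := ih _ (hdel.cons _)
    rw [tbullet_tbulletN, tbullet_tbulletN] at hbody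
    rw [tbullet_tbulletN]
    exact Types.arrowI hbody
  | arrowE _ _ ih₁ ih₂ =>
    have hfun := ih₁ Γ' hdel
    have harg := ih₂ Γ' hdel
    rw [tbullet_tbulletN] at hfun harg ⊢
    exact Types.arrowE hfun harg

end LambdaBullet
end

section
/- Substitution lemma for λ•→: if Γ, x:s ⊢ e : t and Γ ⊢ f : s are derivable in λ•→, then Γ ⊢ e[f/x] : t is derivable, where e[f/x] is capture-avoiding substitution of f for x in e. -/
namespace LambdaBullet

lemma rename_types {Γ : Ctx} {e : Expr} {t : PseudoType}
    (h : Types Γ e t) :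
    ∀ {Δ : Ctx} {f : ℕ → ℕ}, (∀ n u, Γ n = some u → Δ (f n) = some u) →
      Types Δ (rename f e) t := by
  induction h with
  | ax hx ht => intro Δ f hm; exact Types.ax (hm _ _ hx) ht
  | const hk => intro Δ f hm; exact Types.const hk
  | bulletI _ ih => intro Δ f hm; exact Types.bulletI (ih hm)
  | arrowI _ ih =>
    intro Δ f hm
    refine Types.arrowI (ih ?_)
    intro n u hn
    cases n with
    | zero => exact hn
    | succ n => exact hm n u hn
  | arrowE _ _ ih1 ih2 => intro Δ f hm; exact Types.arrowE (ih1 hm) (ih2 hm)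

lemma subst_types {Γ : Ctx} {e : Expr} {t : PseudoType}
    (h : Types Γ e t) :
    ∀ {Δ : Ctx} {ρ : ℕ → Expr},
      (∀ n u, Γ n = some u → IsType u → Types Δ (ρ n) u) →
      Types Δ (substE ρ e) t := by
  induction h with
  | ax hx ht => intro Δ ρ hm; exact hm _ _ hx ht
  | const hk => intro Δ ρ hm; exact Types.const hk
  | bulletI _ ih => intro Δ ρ hm; exact Types.bulletI (ih hm)
  | arrowI _ ih =>
    intro Δ ρ hm
    refine Types.arrowI (ih ?_)
    intro n u hn hu
    cases n with
    | zero =>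
      cases hn
      exact Types.ax rfl hu
    | succ n =>
      exact rename_types (hm n u hn hu) (fun m v hv => hv)
  | arrowE _ _ ih1 ih2 => intro Δ ρ hm; exact Types.arrowE (ih1 hm) (ih2 hm)

/-- Substitution: if `Γ, x:s ⊢ e : t` and `Γ ⊢ f : s`
then `Γ ⊢ e[f/x] : t`. -/
theorem substitution (Γ : Ctx) (s t : PseudoType) (e f : Expr)
    (h1 : Types (Ctx.cons s Γ) e t) (h2 : Types Γ f s) :
    Types Γ (subst0 e f) t := by
  refine subst_types h1 ?_
  intro n u hn hu
  cases n with
  | zero => cases hn; exact h2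
  | succ n => exact Types.ax hn hu

end LambdaBullet
end
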